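/- (Theorem 2, main convergence result.) Under the algorithm setup with Assumption 1, Condition (C1), and Condition (C2): every accumulation point of the sequence ((W_n, H_n))_{n∈ℕ} belongs to VI(C, ∇f); that is, if (W★, H★) ∈ ℝ^{M×R} × ℝ^{R×N} is the limit of some subsequence ((W_{n_i}, H_{n_i}))_{i∈ℕ}, then W★ and H★ are entrywise nonnegative and for every entrywise-nonnegative W ∈ ℝ^{M×R} and H ∈ ℝ^{R×N}: (W − W★)•((W★H★ − V)H★ᵀ) + (H − H★)•(W★ᵀ(W★H★ − V)) ≥ 0. -/

import Mathlib

open Matrix Filter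

/-- Frobenius norm of a real matrix. -/
noncomputable def frob {m n : Type*} [Fintype m] [Fintype n] (X : Matrix m n ℝ) : ℝ :=
  Real.sqrt (∑ i, ∑ j, (X i j) ^ 2)

/-- Frobenius inner product of two real matrices. -/
noncomputable def fip {m n : Type*} [Fintype m] [Fintype n] (X Y : Matrix m n ℝ) : ℝ :=
  ∑ i, ∑ j, X i j * Y i j

/-- Entrywise projection onto the nonnegative orthant. -/
def pplus {m n : Type*} (X : Matrix m n ℝ) : Matrix m n ℝ :=
  Matrix.of fun i j => max (X i j) 0

/-- Entrywise nonnegativity of a matrix. -/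
def matNonneg {m n : Type*} (X : Matrix m n ℝ) : Prop := ∀ i j, 0 ≤ X i j

/-!
The step operators are nonexpansive in the Frobenius norm: `P₊` is, and so is `D ↦ D - c AᵀA D`
whenever `c ‖AᵀA‖ ≤ 2`, because `‖AᵀA D‖² ≤ ‖AᵀA‖ ‖A D‖²`. Each block is therefore a
Krasnosel'skii–Mann iteration with a common fixed point from `m₀` on: the squared distance to that
point drops by at least `α_n (1 - α_n) ‖T_n H_n - H_n‖²` per step, so the residuals
`T_n H_n - H_n` and `S_n W_n - W_n` tend to zero. Entrywise, the residual of a projected gradient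
step `P₊[x - c g] - x` is `-min (c g, x)`; along a convergent subsequence, with `c` bounded away
from zero, this forces the limit gradient to be nonnegative and complementary to the limit point,
which is the variational inequality.
-/

open Topology Finset

section RealSequences

lemma eventually_lt_of_lt_liminf_of_nonneg {ι : Type*} {l : Filter ι} {u : ι → ℝ} {b : ℝ}
    (hb : 0 ≤ b) (h : b < liminf u l) : ∀ᶠ k in l, b < u k := by
  refine eventually_lt_of_lt_liminf h ?_
  -- a sequence that is not bounded below has the junk value `liminf u l = 0`
  by_contra hu
  rw [Real.liminf_of_not_isBoundedUnder hu] at h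
  linarith

lemma exists_pos_eventually_le_of_liminf_pos {ι : Type*} {l : Filter ι} {u : ι → ℝ}
    (h : 0 < liminf u l) : ∃ δ > 0, ∀ᶠ k in l, δ ≤ u k :=
  ⟨liminf u l / 2, by positivity,
    (eventually_lt_of_lt_liminf_of_nonneg (by positivity) (by linarith)).mono fun _ hk => hk.le⟩

lemma exists_pos_eventually_le_mul_one_sub {a : ℕ → ℝ} (ha : ∀ n, a n ∈ Set.Icc (0 : ℝ) 1)
    (h₀ : 0 < liminf a atTop) (h₁ : limsup a atTop < 1) :
    ∃ ε > 0, ∀ᶠ n in atTop, ε ≤ a n * (1 - a n) := by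
  obtain ⟨δ, hδ, hlow⟩ := exists_pos_eventually_le_of_liminf_pos h₀
  obtain ⟨b, hb, hb₁⟩ := exists_between h₁
  have hup : ∀ᶠ n in atTop, a n < b :=
    eventually_lt_of_limsup_lt hb (isBoundedUnder_of ⟨1, fun n => (ha n).2⟩)
  refine ⟨δ * (1 - b), mul_pos hδ (by linarith), ?_⟩
  filter_upwards [hlow, hup] with n hn hn'
  nlinarith [mul_le_mul_of_nonneg_right hn (by linarith : 0 ≤ 1 - a n)]

lemma tendsto_zero_of_eventually_add_mul_le {u t : ℕ → ℝ} {ε : ℝ} (hε : 0 < ε)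
    (hu : ∀ n, 0 ≤ u n) (ht : ∀ n, 0 ≤ t n) (h : ∀ᶠ n in atTop, u (n + 1) + ε * t n ≤ u n) :
    Tendsto t atTop (𝓝 0) := by
  obtain ⟨N, hN⟩ := eventually_atTop.mp h
  have hpartial (K : ℕ) : ∑ k ∈ range K, t (k + N) ≤ u N / ε := by
    rw [le_div_iff₀ hε, sum_mul]
    calc ∑ k ∈ range K, t (k + N) * ε ≤ ∑ k ∈ range K, (u (k + N) - u (k + 1 + N)) :=
          sum_le_sum fun k _ => by
            have := hN (k + N) (by omega)
            rw [Nat.add_right_comm] at this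
            linarith
      _ = u N - u (K + N) := by rw [sum_range_sub' (fun k => u (k + N))]; simp
      _ ≤ u N := by linarith [hu (K + N)]
  have hsum := summable_of_sum_range_le (fun k => ht (k + N)) hpartial
  exact ((summable_nat_add_iff N).mp hsum).tendsto_atTop_zero

lemma nonneg_and_mul_eq_zero_of_tendsto_max_sub {ι : Type*} {l : Filter ι} [l.NeBot]
    {x g c : ι → ℝ} {x₀ g₀ δ : ℝ} (hx : Tendsto x l (𝓝 x₀)) (hg : Tendsto g l (𝓝 g₀))
    (hδ : 0 < δ) (hc : ∀ᶠ k in l, δ ≤ c k)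
    (hres : Tendsto (fun k => max (x k - c k * g k) 0 - x k) l (𝓝 0)) :
    0 ≤ g₀ ∧ x₀ * g₀ = 0 := by
  have hmin : Tendsto (fun k => min (c k * g k) (x k)) l (𝓝 0) := by
    have h := hres.neg
    rw [neg_zero] at h
    refine h.congr fun k => ?_
    simp only [min_def, max_def]
    split_ifs <;> linarith
  have hg₀ : 0 ≤ g₀ := by
    by_contra! hneg
    have hg' : ∀ᶠ k in l, g k < g₀ / 2 := hg.eventually (gt_mem_nhds (by linarith))
    have hmin' : ∀ᶠ k in l, δ * g₀ / 2 < min (c k * g k) (x k) :=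
      hmin.eventually (lt_mem_nhds (by nlinarith))
    obtain ⟨k, hgk, hck, hmk⟩ := (hg'.and (hc.and hmin')).exists
    nlinarith [min_le_left (c k * g k) (x k)]
  refine ⟨hg₀, ?_⟩
  rcases hg₀.eq_or_lt with hzero | hpos
  · rw [← hzero, mul_zero]
  have hg' : ∀ᶠ k in l, g₀ / 2 < g k := hg.eventually (lt_mem_nhds (by linarith))
  have hmin' : ∀ᶠ k in l, min (c k * g k) (x k) < δ * g₀ / 2 :=
    hmin.eventually (gt_mem_nhds (by positivity))
  -- eventually `c k * g k ≥ δ * g k > δ * g₀ / 2`, so the minimum is `x k`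
  have hx0 : Tendsto x l (𝓝 0) := hmin.congr' <| by
    filter_upwards [hg', hc, hmin'] with k hgk hck hmk
    refine (min_choice _ _).resolve_left fun h => ?_
    rw [h] at hmk
    nlinarith
  rw [tendsto_nhds_unique hx hx0, zero_mul]

end RealSequences

section Nonneg

variable {m n : Type*}

lemma matNonneg_pplus (X : Matrix m n ℝ) : matNonneg (pplus X) := fun _ _ => le_max_right _ _

lemma pplus_eq_self {X : Matrix m n ℝ} (hX : matNonneg X) : pplus X = X := by
  ext i j
  exact max_eq_left (hX i j)

lemma matNonneg_smul_add_one_sub_smul {a : ℝ} (ha : a ∈ Set.Icc (0 : ℝ) 1) {X Y : Matrix m n ℝ}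
    (hX : matNonneg X) (hY : matNonneg Y) : matNonneg (a • X + (1 - a) • Y) := fun i j => by
  simp only [Matrix.add_apply, Matrix.smul_apply, smul_eq_mul]
  exact add_nonneg (mul_nonneg ha.1 (hX i j)) (mul_nonneg (sub_nonneg.2 ha.2) (hY i j))

end Nonneg

def IsProjGradStepLeft {m n p : Type*} [Fintype m] [Fintype p] (T : Matrix p n ℝ → Matrix p n ℝ)
    (A : Matrix m p ℝ) (V : Matrix m n ℝ) (c : ℝ) : Prop :=
  (A ≠ 0 → ∀ X, T X = pplus (X - c • (Aᵀ * (A * X - V)))) ∧ (A = 0 → ∀ X, T X = X)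

def IsProjGradStepRight {m n p : Type*} [Fintype n] [Fintype p] (T : Matrix m p ℝ → Matrix m p ℝ)
    (B : Matrix p n ℝ) (V : Matrix m n ℝ) (c : ℝ) : Prop :=
  (B ≠ 0 → ∀ X, T X = pplus (X - c • ((X * B - V) * Bᵀ))) ∧ (B = 0 → ∀ X, T X = X)

lemma IsProjGradStepLeft.eq_pplus {m n p : Type*} [Fintype m] [Fintype p]
    {T : Matrix p n ℝ → Matrix p n ℝ} {A : Matrix m p ℝ} {V : Matrix m n ℝ} {c : ℝ}
    (hT : IsProjGradStepLeft T A V c) {X : Matrix p n ℝ} (hX : matNonneg X) :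
    T X = pplus (X - c • (Aᵀ * (A * X - V))) := by
  by_cases hA : A = 0
  · simp [hT.2 hA, hA, pplus_eq_self hX]
  · exact hT.1 hA X

lemma IsProjGradStepRight.eq_pplus {m n p : Type*} [Fintype n] [Fintype p]
    {T : Matrix m p ℝ → Matrix m p ℝ} {B : Matrix p n ℝ} {V : Matrix m n ℝ} {c : ℝ}
    (hT : IsProjGradStepRight T B V c) {X : Matrix m p ℝ} (hX : matNonneg X) :
    T X = pplus (X - c • ((X * B - V) * Bᵀ)) := by
  by_cases hB : B = 0
  · simp [hT.2 hB, hB, pplus_eq_self hX]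
  · exact hT.1 hB X

section FrobeniusNorm

open scoped Matrix.Norms.Frobenius

variable {m n p : Type*} [Fintype m] [Fintype n] [Fintype p]

lemma frob_eq_norm (X : Matrix m n ℝ) : frob X = ‖X‖ := by
  rw [frob, Matrix.frobenius_norm_def, Real.sqrt_eq_rpow]
  simp only [Real.norm_eq_abs, Real.rpow_two, sq_abs]

lemma norm_sq_eq_sum (X : Matrix m n ℝ) : ‖X‖ ^ 2 = ∑ i, ∑ j, X i j ^ 2 := by
  rw [← frob_eq_norm, frob, Real.sq_sqrt (by positivity)]

lemma norm_sq_eq_fip (X : Matrix m n ℝ) : ‖X‖ ^ 2 = fip X X := by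
  rw [norm_sq_eq_sum]; simp only [fip, sq]

lemma fip_eq_trace (X Y : Matrix m n ℝ) : fip X Y = (Xᵀ * Y).trace := by
  simp only [fip, Matrix.trace, Matrix.diag, Matrix.mul_apply, Matrix.transpose_apply]
  exact sum_comm

lemma fip_mul_left (A : Matrix m p ℝ) (B : Matrix p n ℝ) (C : Matrix m n ℝ) :
    fip (A * B) C = fip B (Aᵀ * C) := by
  rw [fip_eq_trace, fip_eq_trace, Matrix.transpose_mul, Matrix.mul_assoc]

lemma fip_le_norm_mul_norm (X Y : Matrix m n ℝ) : fip X Y ≤ ‖X‖ * ‖Y‖ := by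
  let toL2 (Z : Matrix m n ℝ) : PiLp 2 fun _ : m => EuclideanSpace ℝ n :=
    WithLp.toLp 2 fun i => WithLp.toLp 2 (Z i)
  have hnorm (Z : Matrix m n ℝ) : ‖toL2 Z‖ = ‖Z‖ := rfl
  have hinner : inner ℝ (toL2 X) (toL2 Y) = fip X Y := by
    simp [toL2, PiLp.inner_apply, fip, mul_comm]
  rw [← hinner, ← hnorm, ← hnorm]
  exact real_inner_le_norm _ _

lemma norm_mul_transpose_self (A : Matrix m p ℝ) : ‖A * Aᵀ‖ = ‖Aᵀ * A‖ := by
  rw [← sq_eq_sq₀ (norm_nonneg _) (norm_nonneg _), norm_sq_eq_fip, norm_sq_eq_fip,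
    fip_eq_trace, fip_eq_trace]
  simp only [Matrix.transpose_mul, Matrix.transpose_transpose, ← Matrix.mul_assoc]
  rw [Matrix.trace_mul_comm, Matrix.mul_assoc, Matrix.mul_assoc, Matrix.mul_assoc]

lemma norm_transpose_mul_sq_le (A : Matrix m p ℝ) (Y : Matrix m n ℝ) :
    ‖Aᵀ * Y‖ ^ 2 ≤ ‖Aᵀ * A‖ * ‖Y‖ ^ 2 := by
  calc ‖Aᵀ * Y‖ ^ 2 = fip Y (A * Aᵀ * Y) := by
        rw [norm_sq_eq_fip, fip_mul_left, Matrix.transpose_transpose, Matrix.mul_assoc]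
    _ ≤ ‖Y‖ * ‖A * Aᵀ * Y‖ := fip_le_norm_mul_norm _ _
    _ ≤ ‖Y‖ * (‖A * Aᵀ‖ * ‖Y‖) := by gcongr; exact Matrix.frobenius_norm_mul _ _
    _ = ‖Aᵀ * A‖ * ‖Y‖ ^ 2 := by rw [norm_mul_transpose_self]; ring

lemma norm_sub_smul_sq (X Y : Matrix m n ℝ) (c : ℝ) :
    ‖X - c • Y‖ ^ 2 = ‖X‖ ^ 2 - 2 * c * fip X Y + c ^ 2 * ‖Y‖ ^ 2 := by
  simp only [norm_sq_eq_sum, fip, Matrix.sub_apply, Matrix.smul_apply, smul_eq_mul, mul_sum,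
    ← sum_sub_distrib, ← sum_add_distrib]
  exact sum_congr rfl fun i _ => sum_congr rfl fun j _ => by ring

lemma norm_smul_add_one_sub_smul_sq (a : ℝ) (X Y : Matrix m n ℝ) :
    ‖a • X + (1 - a) • Y‖ ^ 2 = a * ‖X‖ ^ 2 + (1 - a) * ‖Y‖ ^ 2 - a * (1 - a) * ‖X - Y‖ ^ 2 := by
  simp only [norm_sq_eq_sum, Matrix.add_apply, Matrix.sub_apply, Matrix.smul_apply, smul_eq_mul,
    mul_sum, ← sum_sub_distrib, ← sum_add_distrib]
  exact sum_congr rfl fun i _ => sum_congr rfl fun j _ => by ring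

lemma norm_sub_smul_gram_mul_le (A : Matrix m p ℝ) (D : Matrix p n ℝ) {c : ℝ} (hc₀ : 0 ≤ c)
    (hc : c * ‖Aᵀ * A‖ ≤ 2) : ‖D - c • (Aᵀ * (A * D))‖ ≤ ‖D‖ := by
  have hAD : fip D (Aᵀ * (A * D)) = ‖A * D‖ ^ 2 := by rw [norm_sq_eq_fip, fip_mul_left]
  have hgram := norm_transpose_mul_sq_le A (A * D)
  have hsq : ‖D - c • (Aᵀ * (A * D))‖ ^ 2 ≤ ‖D‖ ^ 2 := by
    rw [norm_sub_smul_sq, hAD]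
    nlinarith [mul_le_mul_of_nonneg_left hgram (sq_nonneg c), sq_nonneg ‖A * D‖,
      mul_nonneg hc₀ (sq_nonneg ‖A * D‖)]
  exact (pow_le_pow_iff_left₀ (norm_nonneg _) (norm_nonneg _) two_ne_zero).mp hsq

lemma norm_sub_smul_mul_gram_le (B : Matrix p n ℝ) (D : Matrix m p ℝ) {c : ℝ} (hc₀ : 0 ≤ c)
    (hc : c * ‖Bᵀ * B‖ ≤ 2) : ‖D - c • (D * B * Bᵀ)‖ ≤ ‖D‖ := by
  have h := norm_sub_smul_gram_mul_le Bᵀ Dᵀ hc₀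
    (by rwa [Matrix.transpose_transpose, norm_mul_transpose_self])
  have hT : Dᵀ - c • (Bᵀᵀ * (Bᵀ * Dᵀ)) = (D - c • (D * B * Bᵀ))ᵀ := by
    simp only [Matrix.transpose_sub, Matrix.transpose_smul, Matrix.transpose_mul,
      Matrix.transpose_transpose, Matrix.mul_assoc]
  rwa [hT, Matrix.frobenius_norm_transpose, Matrix.frobenius_norm_transpose] at h

lemma norm_pplus_sub_le (X Y : Matrix m n ℝ) : ‖pplus X - pplus Y‖ ≤ ‖X - Y‖ := by
  simp only [← frob_eq_norm, frob]
  refine Real.sqrt_le_sqrt (sum_le_sum fun i _ => sum_le_sum fun j _ => ?_)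
  simpa [pplus] using sq_le_sq.mpr (abs_max_sub_max_le_abs (X i j) (Y i j) 0)

lemma tendsto_iff_tendsto_frob_sub {ι : Type*} {l : Filter ι} {X : ι → Matrix m n ℝ}
    {X₀ : Matrix m n ℝ} : Tendsto X l (𝓝 X₀) ↔ Tendsto (fun k => frob (X k - X₀)) l (𝓝 0) := by
  simp only [frob_eq_norm]
  exact tendsto_iff_norm_sub_tendsto_zero

lemma IsProjGradStepLeft.norm_sub_le {T : Matrix p n ℝ → Matrix p n ℝ} {A : Matrix m p ℝ}
    {V : Matrix m n ℝ} {c : ℝ} (hT : IsProjGradStepLeft T A V c)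
    (hc : A ≠ 0 → 0 < c ∧ c ≤ 2 / frob (Aᵀ * A)) (X Y : Matrix p n ℝ) :
    ‖T X - T Y‖ ≤ ‖X - Y‖ := by
  by_cases hA : A = 0
  · simp only [hT.2 hA, le_refl]
  obtain ⟨hc₀, hc₂⟩ := hc hA
  rw [frob_eq_norm] at hc₂
  rw [hT.1 hA, hT.1 hA]
  refine (norm_pplus_sub_le _ _).trans ?_
  have h : X - c • (Aᵀ * (A * X - V)) - (Y - c • (Aᵀ * (A * Y - V)))
      = (X - Y) - c • (Aᵀ * (A * (X - Y))) := by
    simp only [Matrix.mul_sub, smul_sub]; abel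
  rw [h]
  exact norm_sub_smul_gram_mul_le A _ hc₀.le (mul_le_of_le_div₀ zero_le_two (norm_nonneg _) hc₂)

lemma IsProjGradStepRight.norm_sub_le {T : Matrix m p ℝ → Matrix m p ℝ} {B : Matrix p n ℝ}
    {V : Matrix m n ℝ} {c : ℝ} (hT : IsProjGradStepRight T B V c)
    (hc : B ≠ 0 → 0 < c ∧ c ≤ 2 / frob (Bᵀ * B)) (X Y : Matrix m p ℝ) :
    ‖T X - T Y‖ ≤ ‖X - Y‖ := by
  by_cases hB : B = 0
  · simp only [hT.2 hB, le_refl]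
  obtain ⟨hc₀, hc₂⟩ := hc hB
  rw [frob_eq_norm] at hc₂
  rw [hT.1 hB, hT.1 hB]
  refine (norm_pplus_sub_le _ _).trans ?_
  have h : X - c • ((X * B - V) * Bᵀ) - (Y - c • ((Y * B - V) * Bᵀ))
      = (X - Y) - c • ((X - Y) * B * Bᵀ) := by
    simp only [Matrix.sub_mul, smul_sub]; abel
  rw [h]
  exact norm_sub_smul_mul_gram_le B _ hc₀.le (mul_le_of_le_div₀ zero_le_two (norm_nonneg _) hc₂)

lemma tendsto_sub_of_mann_iteration {x y : ℕ → Matrix m n ℝ} {a : ℕ → ℝ} {P : Matrix m n ℝ}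
    (ha : ∀ n, a n ∈ Set.Icc (0 : ℝ) 1) (h₀ : 0 < liminf a atTop) (h₁ : limsup a atTop < 1)
    (hrec : ∀ n, x (n + 1) = a n • x n + (1 - a n) • y n)
    (hP : ∀ᶠ n in atTop, ‖y n - P‖ ≤ ‖x n - P‖) :
    Tendsto (fun n => y n - x n) atTop (𝓝 0) := by
  obtain ⟨ε, hε, hεa⟩ := exists_pos_eventually_le_mul_one_sub ha h₀ h₁
  have hsq : Tendsto (fun n => ‖y n - x n‖ ^ 2) atTop (𝓝 0) := by
    refine tendsto_zero_of_eventually_add_mul_le hε (fun n => sq_nonneg ‖x n - P‖)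
      (fun n => sq_nonneg _) ?_
    filter_upwards [hP, hεa] with n hn hn'
    have hxy : x (n + 1) - P = a n • (x n - P) + (1 - a n) • (y n - P) := by rw [hrec]; module
    rw [hxy, norm_smul_add_one_sub_smul_sq, sub_sub_sub_cancel_right, norm_sub_rev (x n) (y n)]
    have h1 := mul_le_mul_of_nonneg_left (pow_le_pow_left₀ (norm_nonneg _) hn 2)
      (sub_nonneg.mpr (ha n).2)
    nlinarith [mul_le_mul_of_nonneg_right hn' (sq_nonneg ‖y n - x n‖)]
  have hnorm := hsq.sqrt
  simp only [Real.sqrt_sq (norm_nonneg _), Real.sqrt_zero] at hnorm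
  exact tendsto_zero_iff_norm_tendsto_zero.mpr hnorm

lemma tendsto_succ_sub_of_mann_iteration {x y : ℕ → Matrix m n ℝ} {a : ℕ → ℝ}
    (ha : ∀ n, a n ∈ Set.Icc (0 : ℝ) 1) (hrec : ∀ n, x (n + 1) = a n • x n + (1 - a n) • y n)
    (hres : Tendsto (fun n => y n - x n) atTop (𝓝 0)) :
    Tendsto (fun n => x (n + 1) - x n) atTop (𝓝 0) := by
  refine squeeze_zero_norm (fun n => ?_) (by simpa using hres.norm)
  rw [hrec, show a n • x n + (1 - a n) • y n - x n = (1 - a n) • (y n - x n) by module,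
    norm_smul, Real.norm_of_nonneg (sub_nonneg.2 (ha n).2)]
  exact mul_le_of_le_one_left (norm_nonneg _) (by linarith [(ha n).1])

end FrobeniusNorm

section Complementarity

variable {m n p : Type*} [Fintype m] [Fintype n] [Fintype p]

lemma matNonneg_and_fip_nonneg_of_tendsto_residual {x G : ℕ → Matrix m n ℝ} {c : ℕ → ℝ}
    {φ : ℕ → ℕ} {X₀ G₀ : Matrix m n ℝ} (hφ : StrictMono φ)
    (hx : Tendsto (fun i => x (φ i)) atTop (𝓝 X₀)) (hG : Tendsto (fun i => G (φ i)) atTop (𝓝 G₀))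
    (hxnn : ∀ k, matNonneg (x k)) (hc : 0 < liminf c atTop)
    (hres : Tendsto (fun k => pplus (x k - c k • G k) - x k) atTop (𝓝 0)) :
    matNonneg X₀ ∧ ∀ X, matNonneg X → 0 ≤ fip (X - X₀) G₀ := by
  obtain ⟨δ, hδ, hcδ⟩ := exists_pos_eventually_le_of_liminf_pos hc
  have hentry {Y : ℕ → Matrix m n ℝ} {Y₀ : Matrix m n ℝ} (hY : Tendsto Y atTop (𝓝 Y₀))
      (i : m) (j : n) : Tendsto (fun k => Y k i j) atTop (𝓝 (Y₀ i j)) :=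
    tendsto_pi_nhds.1 (tendsto_pi_nhds.1 hY i) j
  refine ⟨fun i j => ge_of_tendsto' (hentry hx i j) fun k => hxnn (φ k) i j,
    fun Y hY => sum_nonneg fun i _ => sum_nonneg fun j _ => ?_⟩
  obtain ⟨hG₀, hXG₀⟩ := nonneg_and_mul_eq_zero_of_tendsto_max_sub (hentry hx i j) (hentry hG i j)
    hδ (hφ.tendsto_atTop.eventually hcδ)
    (by simpa [pplus] using hentry (hres.comp hφ.tendsto_atTop) i j)
  rw [Matrix.sub_apply, sub_mul, hXG₀, sub_zero]
  exact mul_nonneg (hY i j) hG₀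

lemma matNonneg_and_fip_nonneg_of_projGradStepLeft {T : ℕ → Matrix p n ℝ → Matrix p n ℝ}
    {A : ℕ → Matrix m p ℝ} {V : Matrix m n ℝ} {c : ℕ → ℝ} {x : ℕ → Matrix p n ℝ} {φ : ℕ → ℕ}
    {A₀ : Matrix m p ℝ} {X₀ : Matrix p n ℝ} (hT : ∀ k, IsProjGradStepLeft (T k) (A k) V (c k))
    (hφ : StrictMono φ) (hA : Tendsto (fun i => A (φ i)) atTop (𝓝 A₀))
    (hx : Tendsto (fun i => x (φ i)) atTop (𝓝 X₀)) (hxnn : ∀ k, matNonneg (x k))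
    (hc : 0 < liminf c atTop) (hres : Tendsto (fun k => T k (x k) - x k) atTop (𝓝 0)) :
    matNonneg X₀ ∧ ∀ X, matNonneg X → 0 ≤ fip (X - X₀) (A₀ᵀ * (A₀ * X₀ - V)) := by
  have hgrad : Tendsto (fun i => (A (φ i))ᵀ * (A (φ i) * x (φ i) - V)) atTop
      (𝓝 (A₀ᵀ * (A₀ * X₀ - V))) := by
    have h := ((by fun_prop : Continuous fun P : Matrix m p ℝ × Matrix p n ℝ =>
      P.1ᵀ * (P.1 * P.2 - V)).tendsto (A₀, X₀)).comp (hA.prodMk_nhds hx)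
    exact h
  exact matNonneg_and_fip_nonneg_of_tendsto_residual (G := fun k => (A k)ᵀ * (A k * x k - V))
    hφ hx hgrad hxnn hc (hres.congr fun k => by rw [(hT k).eq_pplus (hxnn k)])

lemma matNonneg_and_fip_nonneg_of_projGradStepRight {T : ℕ → Matrix m p ℝ → Matrix m p ℝ}
    {B : ℕ → Matrix p n ℝ} {V : Matrix m n ℝ} {c : ℕ → ℝ} {x : ℕ → Matrix m p ℝ} {φ : ℕ → ℕ}
    {B₀ : Matrix p n ℝ} {X₀ : Matrix m p ℝ} (hT : ∀ k, IsProjGradStepRight (T k) (B k) V (c k))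
    (hφ : StrictMono φ) (hB : Tendsto (fun i => B (φ i)) atTop (𝓝 B₀))
    (hx : Tendsto (fun i => x (φ i)) atTop (𝓝 X₀)) (hxnn : ∀ k, matNonneg (x k))
    (hc : 0 < liminf c atTop) (hres : Tendsto (fun k => T k (x k) - x k) atTop (𝓝 0)) :
    matNonneg X₀ ∧ ∀ X, matNonneg X → 0 ≤ fip (X - X₀) ((X₀ * B₀ - V) * B₀ᵀ) := by
  have hgrad : Tendsto (fun i => (x (φ i) * B (φ i) - V) * (B (φ i))ᵀ) atTop
      (𝓝 ((X₀ * B₀ - V) * B₀ᵀ)) := by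
    have h := ((by fun_prop : Continuous fun P : Matrix m p ℝ × Matrix p n ℝ =>
      (P.1 * P.2 - V) * P.2ᵀ).tendsto (X₀, B₀)).comp (hx.prodMk_nhds hB)
    exact h
  exact matNonneg_and_fip_nonneg_of_tendsto_residual (G := fun k => (x k * B k - V) * (B k)ᵀ)
    hφ hx hgrad hxnn hc (hres.congr fun k => by rw [(hT k).eq_pplus (hxnn k)])

end Complementarity

theorem stmt_17_general
    (M N R : ℕ)
    (V : Matrix (Fin M) (Fin N) ℝ)
    (W : ℕ → Matrix (Fin M) (Fin R) ℝ) (H : ℕ → Matrix (Fin R) (Fin N) ℝ)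
    (α β μ lam : ℕ → ℝ)
    (T : ℕ → Matrix (Fin R) (Fin N) ℝ → Matrix (Fin R) (Fin N) ℝ)
    (S : ℕ → Matrix (Fin M) (Fin R) ℝ → Matrix (Fin M) (Fin R) ℝ)
    (hW0 : matNonneg (W 0)) (hH0 : matNonneg (H 0))
    (hα : ∀ n, α n ∈ Set.Icc (0:ℝ) 1) (hβ : ∀ n, β n ∈ Set.Icc (0:ℝ) 1)
    (hμ : ∀ n, W n ≠ 0 → 0 < μ n ∧ μ n ≤ 2 / frob ((W n)ᵀ * W n))
    (hT : ∀ n, W n ≠ 0 → ∀ X, T n X = pplus (X - μ n • ((W n)ᵀ * (W n * X - V))))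
    (hT0 : ∀ n, W n = 0 → ∀ X, T n X = X)
    (hHrec : ∀ n, H (n + 1) = α n • H n + (1 - α n) • T n (H n))
    (hlam : ∀ n, H (n + 1) ≠ 0 → 0 < lam n ∧ lam n ≤ 2 / frob ((H (n + 1))ᵀ * H (n + 1)))
    (hS : ∀ n, H (n + 1) ≠ 0 → ∀ X, S n X = pplus (X - lam n • ((X * H (n + 1) - V) * (H (n + 1))ᵀ)))
    (hS0 : ∀ n, H (n + 1) = 0 → ∀ X, S n X = X)
    (hWrec : ∀ n, W (n + 1) = β n • W n + (1 - β n) • S n (W n))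
    (hA1 : ∃ m₀ : ℕ,
      (∃ Wf : Matrix (Fin M) (Fin R) ℝ, ∀ n ≥ m₀, S n Wf = Wf) ∧
      (∃ Hf : Matrix (Fin R) (Fin N) ℝ, ∀ n ≥ m₀, T n Hf = Hf))
    (hC1α : 0 < atTop.liminf (fun n => α n) ∧ atTop.limsup (fun n => α n) < 1)
    (hC1β : 0 < atTop.liminf (fun n => β n) ∧ atTop.limsup (fun n => β n) < 1)
    (hC2μ : 0 < atTop.liminf (fun n => μ n))
    (hC2lam : 0 < atTop.liminf (fun n => lam n))
    :
    ∀ (Ws : Matrix (Fin M) (Fin R) ℝ) (Hs : Matrix (Fin R) (Fin N) ℝ),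
      (∃ φ : ℕ → ℕ, StrictMono φ ∧
        Tendsto (fun i => frob (W (φ i) - Ws)) atTop (nhds 0) ∧
        Tendsto (fun i => frob (H (φ i) - Hs)) atTop (nhds 0)) →
      matNonneg Ws ∧ matNonneg Hs ∧
        ∀ (W' : Matrix (Fin M) (Fin R) ℝ) (H' : Matrix (Fin R) (Fin N) ℝ),
          matNonneg W' → matNonneg H' →
          fip (W' - Ws) ((Ws * Hs - V) * Hsᵀ) + fip (H' - Hs) (Wsᵀ * (Ws * Hs - V)) ≥ 0 := by
  obtain ⟨m₀, ⟨Wf, hWf⟩, ⟨Hf, hHf⟩⟩ := hA1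
  have hTstep (n : ℕ) : IsProjGradStepLeft (T n) (W n) V (μ n) := ⟨hT n, hT0 n⟩
  have hSstep (n : ℕ) : IsProjGradStepRight (S n) (H (n + 1)) V (lam n) := ⟨hS n, hS0 n⟩
  have hnn (n : ℕ) : matNonneg (H n) ∧ matNonneg (W n) := by
    induction n with
    | zero => exact ⟨hH0, hW0⟩
    | succ n ih =>
      rw [hHrec, hWrec, (hTstep n).eq_pplus ih.1, (hSstep n).eq_pplus ih.2]
      exact ⟨matNonneg_smul_add_one_sub_smul (hα n) ih.1 (matNonneg_pplus _),
        matNonneg_smul_add_one_sub_smul (hβ n) ih.2 (matNonneg_pplus _)⟩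
  have hTres : Tendsto (fun n => T n (H n) - H n) atTop (𝓝 0) :=
    tendsto_sub_of_mann_iteration hα hC1α.1 hC1α.2 hHrec <| eventually_atTop.2 ⟨m₀, fun n hn => by
      simpa only [hHf n hn] using (hTstep n).norm_sub_le (hμ n) (H n) Hf⟩
  have hSres : Tendsto (fun n => S n (W n) - W n) atTop (𝓝 0) :=
    tendsto_sub_of_mann_iteration hβ hC1β.1 hC1β.2 hWrec <| eventually_atTop.2 ⟨m₀, fun n hn => by
      simpa only [hWf n hn] using (hSstep n).norm_sub_le (hlam n) (W n) Wf⟩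
  rintro Ws Hs ⟨φ, hφ, hWφ, hHφ⟩
  rw [← tendsto_iff_tendsto_frob_sub] at hWφ hHφ
  have hHφ' : Tendsto (fun i => H (φ i + 1)) atTop (𝓝 Hs) := by
    simpa using hHφ.add ((tendsto_succ_sub_of_mann_iteration hα hHrec hTres).comp hφ.tendsto_atTop)
  obtain ⟨hHs, hviH⟩ := matNonneg_and_fip_nonneg_of_projGradStepLeft hTstep hφ hWφ hHφ
    (fun n => (hnn n).1) hC2μ hTres
  obtain ⟨hWs, hviW⟩ := matNonneg_and_fip_nonneg_of_projGradStepRight (B := fun n => H (n + 1))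
    hSstep hφ hHφ' hWφ (fun n => (hnn n).2) hC2lam hSres
  exact ⟨hWs, hHs, fun W' H' hW' hH' => add_nonneg (hviW W' hW') (hviH H' hH')⟩

theorem stmt_17
    (M N R : ℕ) (hM : 0 < M) (hN : 0 < N) (hR : 0 < R)
    (V : Matrix (Fin M) (Fin N) ℝ)
    (W : ℕ → Matrix (Fin M) (Fin R) ℝ) (H : ℕ → Matrix (Fin R) (Fin N) ℝ)
    (α β μ lam : ℕ → ℝ)
    (T : ℕ → Matrix (Fin R) (Fin N) ℝ → Matrix (Fin R) (Fin N) ℝ)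
    (S : ℕ → Matrix (Fin M) (Fin R) ℝ → Matrix (Fin M) (Fin R) ℝ)
    (hW0 : matNonneg (W 0)) (hH0 : matNonneg (H 0))
    (hα : ∀ n, α n ∈ Set.Icc (0:ℝ) 1) (hβ : ∀ n, β n ∈ Set.Icc (0:ℝ) 1)
    (hμ : ∀ n, W n ≠ 0 → 0 < μ n ∧ μ n ≤ 2 / frob ((W n)ᵀ * W n))
    (hT : ∀ n, W n ≠ 0 → ∀ X, T n X = pplus (X - μ n • ((W n)ᵀ * (W n * X - V))))
    (hT0 : ∀ n, W n = 0 → ∀ X, T n X = X)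
    (hHrec : ∀ n, H (n + 1) = α n • H n + (1 - α n) • T n (H n))
    (hlam : ∀ n, H (n + 1) ≠ 0 → 0 < lam n ∧ lam n ≤ 2 / frob ((H (n + 1))ᵀ * H (n + 1)))
    (hS : ∀ n, H (n + 1) ≠ 0 → ∀ X, S n X = pplus (X - lam n • ((X * H (n + 1) - V) * (H (n + 1))ᵀ)))
    (hS0 : ∀ n, H (n + 1) = 0 → ∀ X, S n X = X)
    (hWrec : ∀ n, W (n + 1) = β n • W n + (1 - β n) • S n (W n))
    (hA1 : ∃ m₀ : ℕ,
      (∃ Wf : Matrix (Fin M) (Fin R) ℝ, ∀ n ≥ m₀, S n Wf = Wf) ∧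
      (∃ Hf : Matrix (Fin R) (Fin N) ℝ, ∀ n ≥ m₀, T n Hf = Hf))
    (hC1α : 0 < atTop.liminf (fun n => α n) ∧ atTop.limsup (fun n => α n) < 1)
    (hC1β : 0 < atTop.liminf (fun n => β n) ∧ atTop.limsup (fun n => β n) < 1)
    (hC2μ : 0 < atTop.liminf (fun n => μ n))
    (hC2lam : 0 < atTop.liminf (fun n => lam n))
    :
    ∀ (Ws : Matrix (Fin M) (Fin R) ℝ) (Hs : Matrix (Fin R) (Fin N) ℝ),
      (∃ φ : ℕ → ℕ, StrictMono φ ∧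
        Tendsto (fun i => frob (W (φ i) - Ws)) atTop (nhds 0) ∧
        Tendsto (fun i => frob (H (φ i) - Hs)) atTop (nhds 0)) →
      matNonneg Ws ∧ matNonneg Hs ∧
        ∀ (W' : Matrix (Fin M) (Fin R) ℝ) (H' : Matrix (Fin R) (Fin N) ℝ),
          matNonneg W' → matNonneg H' →
          fip (W' - Ws) ((Ws * Hs - V) * Hsᵀ) + fip (H' - Hs) (Wsᵀ * (Ws * Hs - V)) ≥ 0 :=
  stmt_17_general M N R V W H α β μ lam T S hW0 hH0 hα hβ hμ hT hT0 hHrec hlam hS hS0 hWrec hA1 hC1α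
    hC1β hC2μ hC2lam
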